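/- arXiv:2005.01447 — 7 statements merged into one kernel-verified Lean document; each statement's English description precedes it below -/
import Mathlib

section
/- For positive integers k, n, s: k H_k^{(s)}(x_1,...,x_n) = \sum_{j=1}^{k} P_j^{(s)}(x_1,...,x_n) H_{k-j}^{(s)}(x_1,...,x_n). -/
/-- Generating series of the generalized complete symmetric functions. -/
noncomputable def HgS (s n : ℕ) (x : Fin n → ℂ) : PowerSeries ℂ :=
  ∏ i, (∑ j ∈ Finset.range (s + 1), PowerSeries.C ((-x i) ^ j) * PowerSeries.X ^ j)⁻¹

/-- `H_k^{(s)}(x₁,…,xₙ)`. -/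
noncomputable def Hg (s n : ℕ) (x : Fin n → ℂ) (k : ℕ) : ℂ :=
  PowerSeries.coeff k (HgS s n x)

/-- `P_j^{(s)} = c_j^{(s)} p_j` where `p_j` is the `j`-th power sum and
`c_j^{(s)} = (-1)^j s` if `(s+1) ∣ j`, and `(-1)^(j-1)` otherwise. -/
noncomputable def Pg (s n : ℕ) (x : Fin n → ℂ) (j : ℕ) : ℂ :=
  (if (s + 1) ∣ j then (-1 : ℂ) ^ j * s else (-1 : ℂ) ^ (j - 1)) * ∑ i, x i ^ j

/-!
With `u = -xᵢ X`, the `i`-th factor of `HgS` is `(1 - u) / (1 - u^(s+1))`, so its logarithmic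
derivative `X g' / g` is `(s + 1) ∑_{m ≥ 1} u^((s+1) m) - ∑_{j ≥ 1} u^j`, whose `j`-th coefficient is
`c_j^{(s)} xᵢ^j`. Summing over `i`, the logarithmic derivative of `HgS` is `∑_{j ≥ 1} P_j^{(s)} X^j`,
and comparing the coefficients of `X^k` in `X H' = (∑_j P_j^{(s)} X^j) H` gives the identity.
-/

open Finset

namespace PowerSeries

section CommRing

variable {R : Type*} [CommRing R]

theorem coeff_X_mul_derivative (f : R⟦X⟧) (k : ℕ) :
    coeff k (X * derivative R f) = k * coeff k f := by
  cases k with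
  | zero => simp
  | succ k => rw [coeff_succ_X_mul, coeff_derivative]; push_cast; ring

theorem coeff_mul_of_constantCoeff_eq_zero {φ : R⟦X⟧} (h : constantCoeff φ = 0) (ψ : R⟦X⟧)
    (k : ℕ) : coeff k (φ * ψ) = ∑ j ∈ Icc 1 k, coeff j φ * coeff (k - j) ψ := by
  rw [coeff_mul, Nat.sum_antidiagonal_eq_sum_range_succ (fun i j => coeff i φ * coeff j ψ),
    range_eq_Ico, sum_eq_sum_Ico_succ_bot k.succ_pos]
  simp [h, Ico_add_one_right_eq_Icc]

/-- `Q` is the logarithmic derivative `X g' / g` of `g`, written without division. -/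
def HasLogDeriv (g Q : R⟦X⟧) : Prop :=
  X * derivative R g = Q * g

theorem HasLogDeriv.mul {f g P Q : R⟦X⟧} (hf : HasLogDeriv f P) (hg : HasLogDeriv g Q) :
    HasLogDeriv (f * g) (P + Q) := by
  unfold HasLogDeriv at *
  rw [Derivation.leibniz, smul_eq_mul, smul_eq_mul]
  linear_combination f * hg + g * hf

theorem HasLogDeriv.prod {ι : Type*} (t : Finset ι) {g Q : ι → R⟦X⟧}
    (h : ∀ i ∈ t, HasLogDeriv (g i) (Q i)) :
    HasLogDeriv (∏ i ∈ t, g i) (∑ i ∈ t, Q i) := by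
  induction t using Finset.cons_induction with
  | empty => simp [HasLogDeriv]
  | cons a t ha ih =>
    rw [prod_cons, sum_cons]
    exact (h a (mem_cons_self a t)).mul (ih fun i hi => h i (mem_cons_of_mem hi))

/-- `∑_{m ≥ 1} (a X)^(d m)`. -/
def multiplesGeomSeries (d : ℕ) (a : R) : R⟦X⟧ :=
  mk fun j => if d ∣ j ∧ j ≠ 0 then a ^ j else 0

theorem multiplesGeomSeries_mul_one_sub {d : ℕ} (hd : 0 < d) (a : R) :
    multiplesGeomSeries d a * (1 - (C a * X) ^ d) = (C a * X) ^ d := by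
  have hu : (C a * X) ^ d = C (a ^ d) * X ^ d := by rw [mul_pow, map_pow]
  rw [hu, mul_one_sub, mul_left_comm, ← mul_assoc]
  ext j
  rw [coeff_C_mul_X_pow]
  simp only [map_sub, coeff_mul_X_pow', coeff_C_mul, multiplesGeomSeries, coeff_mk]
  rcases lt_trichotomy j d with hj | rfl | hj
  · have : ¬ (d ∣ j ∧ j ≠ 0) := fun h => h.2 (Nat.eq_zero_of_dvd_of_lt h.1 hj)
    simp [this, hj.ne, not_le.2 hj]
  · simp [hd.ne']
  · obtain ⟨m, rfl⟩ := Nat.exists_eq_add_of_le hj.le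
    have hm : m ≠ 0 := by omega
    have hdvd : d ∣ d + m ↔ d ∣ m := Nat.dvd_add_right (dvd_refl d)
    simp [hdvd, hm, pow_add]

theorem hasLogDeriv_one_sub_pow {d : ℕ} (hd : 0 < d) (a : R) :
    HasLogDeriv (1 - (C a * X) ^ d) (-(d : R⟦X⟧) * multiplesGeomSeries d a) := by
  have hu : d⁄dX R (C a * X) = C a := by simp
  rw [HasLogDeriv, mul_assoc, multiplesGeomSeries_mul_one_sub hd, map_sub, derivative_one,
    derivative_pow, hu, ← pow_sub_one_mul hd.ne' (C a * X)]
  ring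

end CommRing

section Field

variable {k : Type*} [Field k]

theorem HasLogDeriv.inv {g Q : k⟦X⟧} (hg : HasLogDeriv g Q) (h0 : constantCoeff g ≠ 0) :
    HasLogDeriv g⁻¹ (-Q) := by
  have hinv : g⁻¹ * g = 1 := PowerSeries.inv_mul_cancel g h0
  rw [HasLogDeriv] at hg ⊢
  rw [derivative_inv']
  linear_combination (-g⁻¹ ^ 2) * hg - Q * g⁻¹ * hinv

/-- Because `∑_{j<n} u^j = (1 - u^n) / (1 - u)`. -/
theorem hasLogDeriv_inv_geom_sum (a : k) {n : ℕ} (hn : 0 < n) :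
    HasLogDeriv (∑ j ∈ range n, (C a * X) ^ j)⁻¹
      ((n : k⟦X⟧) * multiplesGeomSeries n a - multiplesGeomSeries 1 a) := by
  have hpow : constantCoeff (1 - (C a * X) ^ n) ≠ 0 := by simp [hn.ne']
  have hgeom : (∑ j ∈ range n, (C a * X) ^ j)⁻¹ = (1 - C a * X) * (1 - (C a * X) ^ n)⁻¹ := by
    rw [PowerSeries.inv_eq_iff_mul_eq_one (by simp [hn.ne']), mul_right_comm,
      mul_comm (1 - C a * X), geom_sum_mul_neg, PowerSeries.mul_inv_cancel _ hpow]
  have h1 := hasLogDeriv_one_sub_pow one_pos a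
  rw [pow_one, Nat.cast_one] at h1
  rw [hgeom, show (n : k⟦X⟧) * multiplesGeomSeries n a - multiplesGeomSeries 1 a
    = -1 * multiplesGeomSeries 1 a + -(-(n : k⟦X⟧) * multiplesGeomSeries n a) by ring]
  exact h1.mul ((hasLogDeriv_one_sub_pow hn a).inv hpow)

end Field

end PowerSeries

open PowerSeries

noncomputable def logDerivHgS (s n : ℕ) (x : Fin n → ℂ) : ℂ⟦X⟧ :=
  ∑ i, (((s + 1 : ℕ) : ℂ⟦X⟧) * multiplesGeomSeries (s + 1) (-x i) - multiplesGeomSeries 1 (-x i))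

theorem hasLogDeriv_HgS (s n : ℕ) (x : Fin n → ℂ) : HasLogDeriv (HgS s n x) (logDerivHgS s n x) :=
  HasLogDeriv.prod _ fun i _ => by
    simpa only [mul_pow, map_pow] using hasLogDeriv_inv_geom_sum (-x i) (Nat.succ_pos s)

theorem coeff_logDerivHgS (s n : ℕ) (x : Fin n → ℂ) (j : ℕ) :
    coeff j (logDerivHgS s n x) = if j = 0 then 0 else Pg s n x j := by
  rcases j with _ | j
  · simp [logDerivHgS, multiplesGeomSeries]
  simp only [logDerivHgS, map_sum, map_sub, ← map_natCast (C (R := ℂ)), coeff_C_mul,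
    multiplesGeomSeries, coeff_mk, Pg, mul_sum]
  refine sum_congr rfl fun i _ => ?_
  rw [neg_pow]
  simp only [ne_eq, Nat.succ_ne_zero, not_false_eq_true, and_true, one_dvd, if_true,
    Nat.add_sub_cancel]
  split_ifs <;> push_cast <;> ring

theorem stmt4_general (k n s : ℕ) (x : Fin n → ℂ) :
    (k : ℂ) * Hg s n x k =
      ∑ j ∈ Finset.Icc 1 k, Pg s n x j * Hg s n x (k - j) := by
  have h := congrArg (coeff k) (hasLogDeriv_HgS s n x)
  rw [coeff_X_mul_derivative, coeff_mul_of_constantCoeff_eq_zero (by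
    simpa using coeff_logDerivHgS s n x 0)] at h
  rw [Hg, h]
  refine sum_congr rfl fun j hj => ?_
  rw [coeff_logDerivHgS, if_neg (Nat.one_le_iff_ne_zero.1 (mem_Icc.1 hj).1), Hg]

theorem stmt4 (k n s : ℕ) (hk : 0 < k) (hn : 0 < n) (hs : 0 < s) (x : Fin n → ℂ) :
    (k : ℂ) * Hg s n x k =
      ∑ j ∈ Finset.Icc 1 k, Pg s n x j * Hg s n x (k - j) :=
  stmt4_general k n s x
end

section
/- For positive integers k and s: \sum_{t_1 + 2t_2 + ... + s t_s = k} \frac{(-1)^{t_1+t_2+...+t_s} \cdot k}{t_1+t_2+...+t_s} \binom{t_1+t_2+...+t_s}{t_1,t_2,...,t_s} equals s if (s+1) divides k, and equals -1 otherwise. -/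
/-!
With `P = x + ⋯ + x^s` the sum is `k [x^k] (-log (1 + P))` and `1 + P = (1 - x^(s+1)) / (1 - x)`;
we avoid logarithms. Removing one part of size `i + 1` from a partition
(`multinomial (u + eᵢ) · (uᵢ + 1) = multinomial u · (|u| + 1)`) shows both that the sum is
`-[x^k] (D · V)`, where `D = x P'` and `V = Σₙ (Σ_{t ⊢ n} (-1)^|t| multinomial t) xⁿ`, and that
`(1 + P) V = 1`. Then `(1 - x) D = P - s x^(s+1)` and `V = (1 - x) / (1 - x^(s+1))` give
`D V = 1 / (1 - x) - (s + 1) / (1 - x^(s+1)) + s`.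
-/

open Finset PowerSeries

theorem Nat.multinomial_add_single_mul {α : Type*} [DecidableEq α] {s : Finset α} {i : α}
    (hi : i ∈ s) (u : α → ℕ) :
    Nat.multinomial s (u + Pi.single i 1 : α → ℕ) * (u i + 1) =
      Nat.multinomial s u * (∑ j ∈ s, u j + 1) := by
  have hrest : Nat.multinomial (s.erase i) (u + Pi.single i 1 : α → ℕ) =
      Nat.multinomial (s.erase i) u :=
    Nat.multinomial_congr fun j hj => by simp [ne_of_mem_erase hj]
  have hsum : ∑ j ∈ s.erase i, (u + Pi.single i 1 : α → ℕ) j = ∑ j ∈ s.erase i, u j :=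
    sum_congr rfl fun j hj => by simp [ne_of_mem_erase hj]
  rw [← insert_erase hi, sum_insert (notMem_erase i s), Nat.multinomial_insert (notMem_erase i s),
    Nat.multinomial_insert (notMem_erase i s), hrest, hsum]
  simp only [Pi.add_apply, Pi.single_eq_same]
  rw [mul_right_comm, add_right_comm, ← Nat.add_one_mul_choose_eq]
  ring

lemma one_add_sum_fin_pow_succ {R : Type*} [Semiring R] (x : R) (s : ℕ) :
    1 + ∑ i : Fin s, x ^ (i.val + 1) = ∑ j ∈ range (s + 1), x ^ j := by
  rw [Fin.sum_univ_eq_sum_range (fun i => x ^ (i + 1)), sum_range_succ', pow_zero, add_comm]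

lemma one_sub_mul_sum_succ_mul_pow {R : Type*} [CommRing R] (x : R) (n : ℕ) :
    (1 - x) * ∑ i ∈ range n, ((i : R) + 1) * x ^ (i + 1) =
      ∑ i ∈ range n, x ^ (i + 1) - n * x ^ (n + 1) := by
  induction n with
  | zero => simp
  | succ n ih =>
    rw [sum_range_succ, sum_range_succ, mul_add, ih]
    push_cast
    ring

/-- `t i` is the multiplicity of the part `i + 1`. -/
def boundedPartitions (s n : ℕ) : Finset (Fin s → ℕ) :=
  Finset.filter (fun t : Fin s → ℕ => ∑ i, (i.val + 1) * t i = n)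
    (Fintype.piFinset fun _ => Finset.range (n + 1))

lemma mem_boundedPartitions {s n : ℕ} {t : Fin s → ℕ} :
    t ∈ boundedPartitions s n ↔ ∑ i, (i.val + 1) * t i = n := by
  simp only [boundedPartitions, mem_filter, Fintype.mem_piFinset, mem_range, and_iff_right_iff_imp]
  rintro rfl i
  have := single_le_sum (fun j _ => Nat.zero_le ((j.val + 1) * t j)) (mem_univ i)
  exact Nat.lt_succ_of_le ((Nat.le_mul_of_pos_left _ i.val.succ_pos).trans this)

lemma boundedPartitions_zero (s : ℕ) : boundedPartitions s 0 = {0} := by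
  ext t
  simp [mem_boundedPartitions, funext_iff]

lemma sum_ne_zero_of_mem_boundedPartitions {s n : ℕ} {t : Fin s → ℕ}
    (ht : t ∈ boundedPartitions s n) (hn : n ≠ 0) : ∑ i, t i ≠ 0 := by
  rw [mem_boundedPartitions] at ht
  intro h
  simp_all [sum_eq_zero_iff]

lemma sum_succ_mul_add_single {s : ℕ} (u : Fin s → ℕ) (i : Fin s) :
    ∑ j, (j.val + 1) * (u + Pi.single i 1 : Fin s → ℕ) j =
      ∑ j, (j.val + 1) * u j + (i.val + 1) := by
  simp [mul_add, sum_add_distrib, Pi.single_apply]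

lemma sum_boundedPartitions_eq_ite {M : Type*} [AddCommMonoid M] {s : ℕ} (n : ℕ) (i : Fin s)
    (f : (Fin s → ℕ) → M) (hf : ∀ t, t i = 0 → f t = 0) :
    ∑ t ∈ boundedPartitions s n, f t = if i.val + 1 ≤ n then
      ∑ u ∈ boundedPartitions s (n - (i.val + 1)), f (u + Pi.single i 1) else 0 := by
  split_ifs with hin
  · obtain ⟨m, rfl⟩ := Nat.exists_eq_add_of_le' hin
    rw [Nat.add_sub_cancel]
    refine (sum_of_injOn (· + Pi.single i 1) (add_left_injective _).injOn ?_ ?_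
      fun _ _ => rfl).symm
    · intro u hu
      rw [mem_coe, mem_boundedPartitions] at hu ⊢
      rw [sum_succ_mul_add_single, hu]
    · intro t ht hnot
      by_contra hft
      have hcancel : t - Pi.single i 1 + Pi.single i 1 = t := by
        have := Nat.one_le_iff_ne_zero.mpr (mt (hf t) hft)
        ext j
        rcases eq_or_ne j i with rfl | hj <;> simp [*]
      refine hnot ⟨t - Pi.single i 1, ?_, hcancel⟩
      have := sum_succ_mul_add_single (t - Pi.single i 1) i
      rw [hcancel, mem_boundedPartitions.mp ht] at this
      rw [mem_coe, mem_boundedPartitions]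
      omega
  · refine sum_eq_zero fun t ht => hf t ?_
    have := single_le_sum (fun j _ => Nat.zero_le ((j.val + 1) * t j)) (mem_univ i)
    rw [mem_boundedPartitions.mp ht] at this
    by_contra h
    exact hin (this.trans' (Nat.le_mul_of_pos_right _ (Nat.pos_of_ne_zero h)))

noncomputable def signedPartitionSeries (s : ℕ) : ℚ⟦X⟧ :=
  PowerSeries.mk fun n =>
    ∑ t ∈ boundedPartitions s n, (-1) ^ (∑ i, t i) * (Nat.multinomial univ t : ℚ)

lemma sum_boundedPartitions_mul_div_sum {s : ℕ} (n : ℕ) (i : Fin s) :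
    ∑ t ∈ boundedPartitions s n,
        (-1 : ℚ) ^ (∑ j, t j) * ((t i : ℚ) / (∑ j, t j : ℕ)) * Nat.multinomial univ t =
      -coeff n (X ^ (i.val + 1) * signedPartitionSeries s) := by
  rw [coeff_X_pow_mul', sum_boundedPartitions_eq_ite n i _ fun t ht => by simp [ht]]
  split_ifs
  · rw [signedPartitionSeries, PowerSeries.coeff_mk, ← sum_neg_distrib]
    refine sum_congr rfl fun u _ => ?_
    have hsum : ∑ j, (u + Pi.single i 1 : Fin s → ℕ) j = ∑ j, u j + 1 := by
      simp [sum_add_distrib]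
    have hmul : (Nat.multinomial univ (u + Pi.single i 1 : Fin s → ℕ) : ℚ) =
        Nat.multinomial univ u * (∑ j, u j + 1 : ℕ) / (u i + 1 : ℕ) := by
      rw [eq_div_iff (by positivity)]
      exact_mod_cast Nat.multinomial_add_single_mul (mem_univ i) u
    rw [hmul, hsum]
    simp only [Pi.add_apply, Pi.single_eq_same]
    field_simp
    ring
  · simp

lemma one_add_sum_X_pow_mul_signedPartitionSeries (s : ℕ) :
    (1 + ∑ i : Fin s, X ^ (i.val + 1)) * signedPartitionSeries s = 1 := by
  ext (_ | n)
  · simp [signedPartitionSeries, boundedPartitions_zero, Nat.multinomial]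
  · rw [add_mul, one_mul, sum_mul, map_add, map_sum, coeff_one, if_neg n.succ_ne_zero,
      ← neg_neg (∑ i : Fin s, _), ← sum_neg_distrib]
    simp_rw [← sum_boundedPartitions_mul_div_sum]
    rw [sum_comm, signedPartitionSeries, PowerSeries.coeff_mk, ← sub_eq_add_neg, sub_eq_zero]
    refine sum_congr rfl fun t ht => ?_
    have hne : ((∑ j, t j : ℕ) : ℚ) ≠ 0 := by
      exact_mod_cast sum_ne_zero_of_mem_boundedPartitions ht n.succ_ne_zero
    rw [← sum_mul, ← mul_sum, ← sum_div, ← Nat.cast_sum, div_self hne, mul_one]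

lemma sum_boundedPartitions_eq_neg_coeff (s k : ℕ) :
    ∑ t ∈ boundedPartitions s k,
        (-1 : ℚ) ^ (∑ i, t i) * k / (∑ i, t i : ℕ) * Nat.multinomial univ t =
      -coeff k ((∑ i : Fin s, C ((i.val : ℚ) + 1) * X ^ (i.val + 1)) *
        signedPartitionSeries s) := by
  simp_rw [sum_mul, map_sum, mul_assoc, coeff_C_mul, ← sum_neg_distrib, ← mul_neg,
    ← sum_boundedPartitions_mul_div_sum, mul_sum]
  rw [sum_comm]
  refine sum_congr rfl fun t ht => ?_
  have hk : (k : ℚ) = ∑ i : Fin s, ((i.val : ℚ) + 1) * t i := by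
    exact_mod_cast (mem_boundedPartitions.mp ht).symm
  rw [hk, mul_sum, sum_div, sum_mul]
  refine sum_congr rfl fun i _ => ?_
  ring

noncomputable def multiplesSeries (s : ℕ) : ℚ⟦X⟧ :=
  PowerSeries.mk fun n => if s + 1 ∣ n then 1 else 0

lemma one_sub_X_pow_mul_multiplesSeries (s : ℕ) :
    (1 - X ^ (s + 1)) * multiplesSeries s = 1 := by
  ext n
  rw [sub_mul, one_mul, map_sub, coeff_X_pow_mul', coeff_one, multiplesSeries,
    PowerSeries.coeff_mk, PowerSeries.coeff_mk]
  by_cases h : s + 1 ≤ n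
  · obtain ⟨m, rfl⟩ := Nat.exists_eq_add_of_le' h
    simp [Nat.dvd_add_self_right]
  · have : s + 1 ∣ n ↔ n = 0 :=
      ⟨fun hd => Nat.eq_zero_of_dvd_of_lt hd (by omega), by rintro rfl; simp⟩
    simp [h, this]

lemma sum_succ_mul_X_pow_mul_signedPartitionSeries (s : ℕ) :
    (∑ i : Fin s, C ((i.val : ℚ) + 1) * X ^ (i.val + 1)) * signedPartitionSeries s =
      PowerSeries.mk 1 - (C (s : ℚ) + 1) * multiplesSeries s + C (s : ℚ) := by
  have hQ : (1 - X) * (1 + ∑ i : Fin s, X ^ (i.val + 1)) = (1 - X ^ (s + 1) : ℚ⟦X⟧) := by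
    rw [one_add_sum_fin_pow_succ, mul_neg_geom_sum]
  have hD : (1 - X) * ∑ i : Fin s, C ((i.val : ℚ) + 1) * X ^ (i.val + 1) =
      ∑ i : Fin s, X ^ (i.val + 1) - C (s : ℚ) * X ^ (s + 1) := by
    simp only [map_add, map_natCast, map_one]
    rw [Fin.sum_univ_eq_sum_range (fun i => ((i : ℚ⟦X⟧) + 1) * X ^ (i + 1)),
      Fin.sum_univ_eq_sum_range (fun i => (X : ℚ⟦X⟧) ^ (i + 1)), one_sub_mul_sum_succ_mul_pow]
  have hQV := one_add_sum_X_pow_mul_signedPartitionSeries s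
  have hχ := one_sub_X_pow_mul_multiplesSeries s
  have hV : signedPartitionSeries s = (1 - X) * multiplesSeries s := by
    linear_combination (-signedPartitionSeries s) * hχ
      - (signedPartitionSeries s * multiplesSeries s) * hQ + ((1 - X) * multiplesSeries s) * hQV
  have hQχ : (1 + ∑ i : Fin s, X ^ (i.val + 1)) * multiplesSeries s = PowerSeries.mk 1 := by
    linear_combination (PowerSeries.mk 1 * multiplesSeries s) * hQ + PowerSeries.mk 1 * hχ
      - ((1 + ∑ i : Fin s, X ^ (i.val + 1)) * multiplesSeries s) *
        mk_one_mul_one_sub_eq_one (S := ℚ)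
  linear_combination (∑ i : Fin s, C ((i.val : ℚ) + 1) * X ^ (i.val + 1)) * hV
    + multiplesSeries s * hD + hQχ + C (s : ℚ) * hχ

theorem stmt8_general (k s : ℕ) (hk : 0 < k) :
    ∑ t ∈ Finset.filter (fun t : Fin s → ℕ => ∑ i, (i.val + 1) * t i = k)
        (Fintype.piFinset fun _ => Finset.range (k + 1)),
      (-1 : ℚ) ^ (∑ i, t i) * k / (∑ i, t i) * Nat.multinomial Finset.univ t =
      if (s + 1) ∣ k then (s : ℚ) else -1 := by
  rw [← boundedPartitions, sum_boundedPartitions_eq_neg_coeff,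
    sum_succ_mul_X_pow_mul_signedPartitionSeries]
  simp only [map_add, map_sub, add_mul, one_mul, coeff_C_mul, coeff_C, multiplesSeries,
    PowerSeries.coeff_mk, Pi.one_apply, if_neg hk.ne']
  split_ifs <;> ring

/-- `∑_{t₁+2t₂+⋯+s tₛ = k} ((-1)^{t₁+⋯+tₛ} k / (t₁+⋯+tₛ)) (t₁+⋯+tₛ choose t₁,…,tₛ)`
equals `s` if `(s+1) ∣ k` and `-1` otherwise.  The sum is over all tuples
`(t₁,…,tₛ)` of nonnegative integers with `∑ i tᵢ = k`; since `k ≥ 1`, each such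
`tᵢ` is at most `k`, so the sum is realised over `(Finset.range (k+1))^s`. -/
theorem stmt8 (k s : ℕ) (hk : 0 < k) (hs : 0 < s) :
    ∑ t ∈ Finset.filter (fun t : Fin s → ℕ => ∑ i, (i.val + 1) * t i = k)
        (Fintype.piFinset fun _ => Finset.range (k + 1)),
      (-1 : ℚ) ^ (∑ i, t i) * k / (∑ i, t i) * Nat.multinomial Finset.univ t =
      if (s + 1) ∣ k then (s : ℚ) else -1 :=
  stmt8_general k s hk
end

section
/- For positive integers k, n, s: H_k^{(s)}(x_1,...,x_n) = (-1)^k \sum_{\lambda \vdash k, \ell(\lambda) \le s} m_{\lambda}(\omega_{1,s+1},...,\omega_{s,s+1}) \, h_{\lambda}(x_1,...,x_n), where the sum is over partitions \lambda of k with at most s parts, h_{\lambda} = \prod_i h_{\lambda_i}, and \omega_{j,s+1} = e^{2\pi i j/(s+1)}. -/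
/-- The complete homogeneous symmetric function `h_k(x₁,…,xₙ)`, as the coefficient
of `t^k` in `∏ i (1 - xᵢ t)⁻¹`. -/
noncomputable def hg (n : ℕ) (x : Fin n → ℂ) (k : ℕ) : ℂ :=
  PowerSeries.coeff k (∏ i, (1 - PowerSeries.C (x i) * PowerSeries.X)⁻¹)

/-- The evaluation of the monomial symmetric function `m_λ` (for `λ ⊢ k`) at
`m` variables `y₁,…,y_m`: the sum of all distinct monomials `y₁^{a₁} ⋯ y_m^{a_m}`
whose multiset of nonzero exponents equals the multiset of parts of `λ`. -/
noncomputable def msym (m : ℕ) (y : Fin m → ℂ) (k : ℕ) (lam : Nat.Partition k) : ℂ :=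
  ∑ f ∈ Finset.filter
      (fun f : Fin m → ℕ => Multiset.filter (fun a => a ≠ 0) (Finset.univ.val.map f) = lam.parts)
      (Fintype.piFinset fun _ => Finset.range (k + 1)),
    ∏ i, y i ^ f i

/-- `λ`-indexed product of complete homogeneous symmetric functions `h_λ = ∏ h_{λᵢ}`. -/
noncomputable def hprod (n : ℕ) (x : Fin n → ℂ) (k : ℕ) (lam : Nat.Partition k) : ℂ :=
  (lam.parts.map (hg n x)).prod
/-!
The nontrivial `(s+1)`-th roots of unity `ω₁, …, ω_s` are the roots of `1 + t + ⋯ + t^s`, so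
`1 - x t + ⋯ + (-x t)^s = ∏ⱼ (1 + ωⱼ x t)`. Hence the generating series of `H^{(s)}` is
`∏ⱼ G(-ωⱼ t)` with `G(t) = ∑ₖ hₖ tᵏ`, and its `t^k` coefficient is `(-1)^k` times the sum, over
the weak compositions `a` of `k` into `s` parts, of `∏ⱼ ωⱼ^{aⱼ} h_{aⱼ}`. Grouping the compositions
by their underlying partition `λ` turns this sum into `∑_λ m_λ(ω) h_λ`.
-/

open Finset

open Polynomial in
theorem IsPrimitiveRoot.geom_sum_eq_prod_one_sub_mul {R : Type*} [CommRing R] [IsDomain R]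
    {n : ℕ} {μ : R} (hμ : IsPrimitiveRoot μ (n + 1)) (y : R) :
    ∑ j ∈ range (n + 1), y ^ j = ∏ k ∈ range n, (1 - μ ^ (k + 1) * y) := by
  suffices hX : ∑ j ∈ range (n + 1), (X : R[X]) ^ j = ∏ k ∈ range n, (1 - C μ ^ (k + 1) * X) by
    simpa [eval_prod] using congrArg (eval y) hX
  -- `1 - X^(n+1) = ∏_{i ≤ n} (1 - μ^i X)`, and the factor `i = 0` is `1 - X`.
  have hfactor := congrArg (eval 1) <| X_pow_sub_C_eq_prod (hμ.map_of_injective C_injective)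
    n.succ_pos (rfl : (X : R[X]) ^ (n + 1) = _)
  simp only [eval_sub, eval_pow, eval_X, one_pow, eval_C, eval_prod] at hfactor
  rw [prod_range_succ', ← geom_sum_mul_neg, pow_zero, one_mul] at hfactor
  exact mul_right_cancel₀ (sub_ne_zero.mpr (by simpa using (X_ne_C (1 : R)).symm)) hfactor

namespace PowerSeries

section CommSemiring

variable {R : Type*} [CommSemiring R]

theorem rescale_C (c a : R) : rescale c (C a) = C a := by
  ext n
  rw [coeff_rescale, coeff_C]
  split_ifs with hn <;> simp [hn]

theorem coeff_prod_rescale {ι : Type*} [Fintype ι] [DecidableEq ι] (c : ι → R) (φ : R⟦X⟧)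
    (m : ℕ) :
    coeff m (∏ i, rescale (c i) φ) = ∑ f ∈ piAntidiag univ m, ∏ i, c i ^ f i * coeff (f i) φ := by
  rw [coeff_prod, finsuppAntidiag, sum_map]
  simp only [coeff_rescale]
  exact sum_attach _ fun f : ι → ℕ => ∏ i, c i ^ f i * coeff (f i) φ

end CommSemiring

section Field

variable {k : Type*} [Field k]

theorem prod_inv_distrib {ι : Type*} (s : Finset ι) (f : ι → k⟦X⟧) :
    (∏ i ∈ s, f i)⁻¹ = ∏ i ∈ s, (f i)⁻¹ :=
  map_prod (⟨⟨(·⁻¹), inv_one⟩, fun φ ψ => (PowerSeries.mul_inv_rev φ ψ).trans (mul_comm _ _)⟩ :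
    k⟦X⟧ →* k⟦X⟧) f s

theorem rescale_inv (c : k) (φ : k⟦X⟧) : rescale c φ⁻¹ = (rescale c φ)⁻¹ := by
  have hconst : constantCoeff (rescale c φ) = constantCoeff φ := by
    rw [← coeff_zero_eq_constantCoeff_apply, coeff_rescale, pow_zero, one_mul,
      coeff_zero_eq_constantCoeff_apply]
  by_cases hφ : constantCoeff φ = 0
  · rw [inv_eq_zero.mpr hφ, inv_eq_zero.mpr (hconst.trans hφ), map_zero]
  · rw [eq_inv_iff_mul_eq_one (hconst.trans_ne hφ), ← map_mul, PowerSeries.inv_mul_cancel _ hφ,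
      map_one]

end Field

end PowerSeries

open PowerSeries

theorem HgS_eq_prod_rescale {s : ℕ} {ζ : ℂ} (hζ : IsPrimitiveRoot ζ (s + 1)) (n : ℕ)
    (x : Fin n → ℂ) :
    HgS s n x = ∏ j : Fin s, rescale (-ζ ^ (j.val + 1)) (∏ i, (1 - C (x i) * X)⁻¹) := by
  have hfactor (a : ℂ) : ∑ j ∈ range (s + 1), C ((-a) ^ j) * X ^ j =
      ∏ j : Fin s, rescale (-ζ ^ (j.val + 1)) (1 - C a * X) := by
    have h := (hζ.map_of_injective (C_injective (R := ℂ))).geom_sum_eq_prod_one_sub_mul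
      (C (-a) * X)
    simp only [mul_pow, ← map_pow] at h
    rw [h, Fin.prod_univ_eq_prod_range (fun j => rescale (-ζ ^ (j + 1)) (1 - C a * X))]
    refine prod_congr rfl fun j _ => ?_
    simp only [map_sub, map_one, map_mul, rescale_X, rescale_C, map_neg, map_pow]
    ring
  simp only [HgS, hfactor, PowerSeries.prod_inv_distrib, ← PowerSeries.rescale_inv]
  rw [prod_comm]
  simp only [← map_prod]

section NonzeroValues

variable {ι : Type*} [Fintype ι]

/-- The partition underlying the weak composition `f`. -/
def nonzeroValues (f : ι → ℕ) : Multiset ℕ :=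
  (univ.val.map f).filter (· ≠ 0)

theorem nonzeroValues_eq_map (f : ι → ℕ) :
    nonzeroValues f = (univ.filter (f · ≠ 0)).val.map f :=
  Multiset.filter_map _ _ _

theorem sum_nonzeroValues (f : ι → ℕ) : (nonzeroValues f).sum = ∑ i, f i := by
  rw [nonzeroValues_eq_map, ← sum_filter_ne_zero]
  rfl

theorem prod_map_nonzeroValues {M : Type*} [CommMonoid M] {h : ℕ → M} (h0 : h 0 = 1)
    (f : ι → ℕ) : ((nonzeroValues f).map h).prod = ∏ i, h (f i) := by
  rw [nonzeroValues_eq_map, Multiset.map_map]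
  exact prod_filter_of_ne fun i _ hi hfi => hi (by simp [hfi, h0])

theorem card_nonzeroValues_le (f : ι → ℕ) : Multiset.card (nonzeroValues f) ≤ Fintype.card ι :=
  (Multiset.card_le_card (Multiset.filter_le _ _)).trans (by simp)

end NonzeroValues

theorem sum_msym_mul_prod_map_eq {m k : ℕ} (y : Fin m → ℂ) {h : ℕ → ℂ} (h0 : h 0 = 1) :
    ∑ lam ∈ univ.filter (fun lam : Nat.Partition k => Multiset.card lam.parts ≤ m),
        msym m y k lam * (lam.parts.map h).prod =
      ∑ f ∈ piAntidiag univ k, ∏ j, y j ^ f j * h (f j) := by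
  set partitions := univ.filter (fun lam : Nat.Partition k => Multiset.card lam.parts ≤ m)
  set compositions := Fintype.piFinset fun _ : Fin m => range (k + 1)
  have hinj : Function.Injective (Nat.Partition.parts (n := k)) := fun _ _ => Nat.Partition.ext
  have hfiber : compositions.filter (fun f => nonzeroValues f ∈ partitions.map ⟨_, hinj⟩) =
      piAntidiag univ k := by
    ext f
    simp only [compositions, partitions, mem_filter, Fintype.mem_piFinset, mem_range, mem_map,
      mem_univ, true_and, Function.Embedding.coeFn_mk, mem_piAntidiag, implies_true, and_true]
    constructor
    · rintro ⟨-, lam, -, hlam⟩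
      rw [← sum_nonzeroValues, ← hlam, lam.parts_sum]
    · intro hf
      refine ⟨fun j => ?_, Nat.Partition.ofSums k (univ.val.map f) (by rw [← hf]; rfl),
        (card_nonzeroValues_le f).trans (by simp), rfl⟩
      exact Nat.lt_succ_of_le (hf ▸ single_le_sum (fun _ _ => Nat.zero_le _) (mem_univ j))
  calc _ = ∑ lam ∈ partitions, ∑ f ∈ compositions with nonzeroValues f = lam.parts,
          ∏ j, y j ^ f j * h (f j) := by
        refine sum_congr rfl fun lam _ => ?_
        rw [msym, sum_mul]
        refine sum_congr rfl fun f hf => ?_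
        rw [← (mem_filter.mp hf).2, prod_map_nonzeroValues h0, prod_mul_distrib]
    _ = _ := by
        rw [← hfiber, ← sum_fiberwise_eq_sum_filter, sum_map]
        rfl

theorem stmt9_general (k n s : ℕ) (x : Fin n → ℂ) :
    Hg s n x k =
      (-1 : ℂ) ^ k *
        ∑ lam ∈ Finset.filter (fun lam : Nat.Partition k => Multiset.card lam.parts ≤ s)
            Finset.univ,
          msym s (fun j => Complex.exp (2 * Real.pi * Complex.I * (j.val + 1) / (s + 1))) k lam *
            hprod n x k lam := by
  set ζ := Complex.exp (2 * Real.pi * Complex.I / (s + 1))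
  have hζ : IsPrimitiveRoot ζ (s + 1) := by
    simpa using Complex.isPrimitiveRoot_exp (s + 1) s.succ_ne_zero
  have hω : (fun j : Fin s => Complex.exp (2 * Real.pi * Complex.I * (j.val + 1) / (s + 1))) =
      fun j => ζ ^ (j.val + 1) := by
    funext j
    rw [← Complex.exp_nat_mul]
    congr 1
    push_cast
    ring
  have hg_zero : hg n x 0 = 1 := by
    simp [hg, map_prod]
  simp only [hprod]
  rw [hω, sum_msym_mul_prod_map_eq _ hg_zero, Hg, HgS_eq_prod_rescale hζ, coeff_prod_rescale,
    mul_sum]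
  refine sum_congr rfl fun f hf => ?_
  rw [← (mem_piAntidiag.mp hf).1, ← prod_pow_eq_pow_sum, ← prod_mul_distrib]
  refine prod_congr rfl fun j _ => ?_
  rw [neg_pow, mul_assoc, hg]

theorem stmt9 (k n s : ℕ) (hk : 0 < k) (hn : 0 < n) (hs : 0 < s) (x : Fin n → ℂ) :
    Hg s n x k =
      (-1 : ℂ) ^ k *
        ∑ lam ∈ Finset.filter (fun lam : Nat.Partition k => Multiset.card lam.parts ≤ s)
            Finset.univ,
          msym s (fun j => Complex.exp (2 * Real.pi * Complex.I * (j.val + 1) / (s + 1))) k lam *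
            hprod n x k lam :=
  stmt9_general k n s x
end

section
/- For positive integers k, n, s: H_k^{(s-1)}(x_1,...,x_n) = \sum_{j=0}^{\lfloor k/s \rfloor} (-1)^{sj} h_j(x_1^s,...,x_n^s) \, e_{k-sj}(x_1,...,x_n). -/
/-- Generating series of the generalized elementary symmetric functions. -/
noncomputable def EgS (s n : ℕ) (x : Fin n → ℂ) : PowerSeries ℂ :=
  ∏ i, ∑ j ∈ Finset.range (s + 1), PowerSeries.C (x i ^ j) * PowerSeries.X ^ j

/-- `E_k^{(s)}(x₁,…,xₙ)`. -/
noncomputable def Eg (s n : ℕ) (x : Fin n → ℂ) (k : ℕ) : ℂ :=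
  PowerSeries.coeff k (EgS s n x)

/-- The elementary symmetric function `e_k(x₁,…,xₙ)`. -/
noncomputable def eg (n : ℕ) (x : Fin n → ℂ) (k : ℕ) : ℂ :=
  PowerSeries.coeff k (∏ i, (1 + PowerSeries.C (x i) * PowerSeries.X))

/-!
Since `1 - y + ⋯ + (-y)^(s-1) = (1 - (-y)^s) / (1 + y)`, the `i`-th factor of the generating
series of `H^{(s-1)}` is `(1 + xᵢ t) / (1 - (-xᵢ)^s t^s)`. The numerators multiply to the generating
series of the `e_k`, and the inverted denominators to that of the `h_j(x₁^s, …, xₙ^s)` with `t`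
replaced by `(-1)^s t^s`; comparing coefficients of `t^k` gives the formula.
-/

open PowerSeries Finset

section CommRing

variable {R : Type*} [CommRing R]

theorem PowerSeries.coeff_expand_mul_eq_sum (s : ℕ) (hs : s ≠ 0) (f g : R⟦X⟧) (k : ℕ) :
    coeff k (expand s hs f * g) =
      ∑ j ∈ range (k / s + 1), coeff j f * coeff (k - s * j) g := by
  have hmultiples : (range (k + 1)).filter (s ∣ ·) = (range (k / s + 1)).image (s * ·) := by
    ext i
    simp only [mem_filter, mem_range, mem_image, Nat.lt_succ_iff,
      Nat.le_div_iff_mul_le (Nat.pos_of_ne_zero hs)]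
    constructor
    · rintro ⟨hi, j, rfl⟩
      exact ⟨j, by rwa [mul_comm], rfl⟩
    · rintro ⟨j, hj, rfl⟩
      exact ⟨by rwa [mul_comm], dvd_mul_right s j⟩
  rw [coeff_mul, Nat.sum_antidiagonal_eq_sum_range_succ_mk,
    ← sum_filter_of_ne fun i _ h =>
      by_contra fun hi => h (by rw [coeff_expand_of_not_dvd s hs f hi, zero_mul]),
    hmultiples, sum_image fun i _ j _ h => Nat.eq_of_mul_eq_mul_left (Nat.pos_of_ne_zero hs) h]
  simp only [coeff_expand_mul]

theorem PowerSeries.expand_rescale_one_sub_C_mul_X (s : ℕ) (hs : s ≠ 0) (c b : R) :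
    expand s hs (rescale c (1 - C b * X)) = 1 - C (c * b) * X ^ s := by
  have hC : rescale c (C b) = C b := by
    ext m
    by_cases hm : m = 0 <;> simp [coeff_C, hm]
  simp only [map_sub, map_one, map_mul, rescale_X, hC, expand_C, expand_X]
  ring

theorem PowerSeries.geom_sum_C_neg_mul_X_mul_one_add (a : R) (s : ℕ) :
    (∑ j ∈ range s, C ((-a) ^ j) * X ^ j) * (1 + C a * X) = 1 - C ((-a) ^ s) * X ^ s := by
  have h := geom_sum_mul_neg (C (-a) * X : R⟦X⟧) s
  rw [map_neg, neg_mul, sub_neg_eq_add] at h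
  simpa only [map_pow, map_neg, ← neg_mul, mul_pow] using h

end CommRing

section Field

variable {k : Type*} [Field k]

theorem PowerSeries.map_inv_of_constantCoeff_ne_zero {F : Type*} [FunLike F k⟦X⟧ k⟦X⟧]
    [RingHomClass F k⟦X⟧ k⟦X⟧] (φ : F) {f : k⟦X⟧} (hf : constantCoeff f ≠ 0) : φ f⁻¹ = (φ f)⁻¹ := by
  have h : φ f⁻¹ * φ f = 1 := by rw [← map_mul, PowerSeries.inv_mul_cancel f hf, map_one]
  have hφf : constantCoeff (φ f) ≠ 0 :=
    right_ne_zero_of_mul_eq_one (by rw [← map_mul, h, map_one])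
  rwa [PowerSeries.eq_inv_iff_mul_eq_one hφf]

theorem PowerSeries.inv_geom_sum_C_neg_mul_X {s : ℕ} (hs : 0 < s) (a : k) :
    (∑ j ∈ range s, C ((-a) ^ j) * X ^ j)⁻¹ = (1 + C a * X) * (1 - C ((-a) ^ s) * X ^ s)⁻¹ := by
  rw [PowerSeries.inv_eq_iff_mul_eq_one (by simp [map_sum, zero_pow_eq, hs]), mul_right_comm,
    mul_comm (1 + C a * X), geom_sum_C_neg_mul_X_mul_one_add,
    PowerSeries.mul_inv_cancel _ (by simp [hs.ne'])]

end Field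

theorem HgS_pred_eq {s : ℕ} (hs : 0 < s) (n : ℕ) (x : Fin n → ℂ) :
    HgS (s - 1) n x = expand s hs.ne' (rescale ((-1) ^ s) (∏ i, (1 - C (x i ^ s) * X)⁻¹)) *
      ∏ i, (1 + C (x i) * X) := by
  rw [HgS, Nat.sub_add_cancel hs]
  simp_rw [inv_geom_sum_C_neg_mul_X hs]
  rw [prod_mul_distrib, mul_comm, map_prod, map_prod]
  congr 1
  refine prod_congr rfl fun i _ => ?_
  rw [map_inv_of_constantCoeff_ne_zero _ (by simp),
    map_inv_of_constantCoeff_ne_zero _ (by simp), expand_rescale_one_sub_C_mul_X, ← neg_pow]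

theorem stmt11_general (k n s : ℕ) (hs : 0 < s) (x : Fin n → ℂ) :
    Hg (s - 1) n x k =
      ∑ j ∈ Finset.range (k / s + 1),
        (-1 : ℂ) ^ (s * j) * hg n (fun i => x i ^ s) j * eg n x (k - s * j) := by
  rw [Hg, HgS_pred_eq hs, coeff_expand_mul_eq_sum]
  refine sum_congr rfl fun j _ => ?_
  rw [coeff_rescale, pow_mul, hg, eg, mul_assoc]

/-- `H_k^{(s-1)}(x₁,…,xₙ) = ∑_{j=0}^{⌊k/s⌋} (-1)^{sj} h_j(x₁^s,…,xₙ^s) e_{k-sj}(x₁,…,xₙ)`. -/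
theorem stmt11 (k n s : ℕ) (hk : 0 < k) (hn : 0 < n) (hs : 0 < s) (x : Fin n → ℂ) :
    Hg (s - 1) n x k =
      ∑ j ∈ Finset.range (k / s + 1),
        (-1 : ℂ) ^ (s * j) * hg n (fun i => x i ^ s) j * eg n x (k - s * j) :=
  stmt11_general k n s hs x
end

section
/- For positive integers k, n, s: e_k(x_1^s,...,x_n^s) = (-1)^k \sum_{j=0}^{ks} (-1)^j e_j(x_1,...,x_n) E_{ks-j}^{(s-1)}(x_1,...,x_n). -/
/-! Over any commutative ring, `(1 - aX)(1 + aX + ⋯ + (aX)^{s-1}) = 1 - a^s X^s`, so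
`∏ (1 - xᵢX) · ∏ (1 + xᵢX + ⋯ + (xᵢX)^{s-1}) = ∏ (1 - xᵢ^s X^s)`. The first factor is the generating
series of `(-1)^j e_j(x)`, the second that of `E^{(s-1)}(x)`, and the right side is the generating
series of `(-1)^k e_k(x^s)` with `X` replaced by `X^s`; comparing coefficients of `X^{ks}` gives the
identity. -/

open Finset

namespace PowerSeries

variable {ι R : Type*} [Fintype ι] [CommRing R]

theorem one_sub_C_mul_X_mul_geom_sum (a : R) (m : ℕ) :
    (1 - C a * X) * ∑ j ∈ range m, C (a ^ j) * X ^ j = 1 - C (a ^ m) * X ^ m := by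
  simp only [map_pow, ← mul_pow]
  rw [mul_comm, geom_sum_mul_neg]

theorem rescale_neg_one_one_add_C_mul_X (a : R) :
    rescale (-1) (1 + C a * X) = 1 - C a * X := by
  ext (_ | _ | n) <;> simp [coeff_C]

theorem expand_one_sub_C_mul_X (m : ℕ) (hm : m ≠ 0) (a : R) :
    expand m hm (1 - C a * X) = 1 - C a * X ^ m := by
  simp [expand_C]

theorem rescale_prod_mul_prod_geom_sum (m : ℕ) (hm : m ≠ 0) (x : ι → R) :
    rescale (-1) (∏ i, (1 + C (x i) * X)) * ∏ i, ∑ j ∈ range m, C (x i ^ j) * X ^ j =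
      expand m hm (rescale (-1) (∏ i, (1 + C (x i ^ m) * X))) := by
  simp only [map_prod, rescale_neg_one_one_add_C_mul_X, expand_one_sub_C_mul_X,
    ← prod_mul_distrib, one_sub_C_mul_X_mul_geom_sum]

end PowerSeries

open PowerSeries

theorem stmt14_general (k n s : ℕ) (hs : 0 < s) (x : Fin n → ℂ) :
    eg n (fun i => x i ^ s) k =
      (-1 : ℂ) ^ k *
        ∑ j ∈ Finset.range (k * s + 1),
          (-1 : ℂ) ^ j * eg n x j * Eg (s - 1) n x (k * s - j) := by
  obtain ⟨t, rfl⟩ := Nat.exists_eq_add_one_of_ne_zero hs.ne'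
  have key := congrArg (coeff ((t + 1) * k))
    (rescale_prod_mul_prod_geom_sum (t + 1) t.succ_ne_zero x)
  rw [coeff_expand_mul, coeff_rescale, coeff_mul, Nat.sum_antidiagonal_eq_sum_range_succ_mk] at key
  simp only [coeff_rescale] at key
  have hsum : ∑ j ∈ range ((t + 1) * k + 1), (-1) ^ j * eg n x j * Eg t n x ((t + 1) * k - j) =
      (-1) ^ k * eg n (fun i => x i ^ (t + 1)) k := key
  rw [Nat.add_sub_cancel, mul_comm k, hsum, ← mul_assoc, ← pow_add, ← two_mul, pow_mul,
    neg_one_sq, one_pow, one_mul]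

/-- `e_k(x₁^s,…,xₙ^s) = (-1)^k ∑_{j=0}^{ks} (-1)^j e_j(x₁,…,xₙ) E_{ks-j}^{(s-1)}(x₁,…,xₙ)`. -/
theorem stmt14 (k n s : ℕ) (hk : 0 < k) (hn : 0 < n) (hs : 0 < s) (x : Fin n → ℂ) :
    eg n (fun i => x i ^ s) k =
      (-1 : ℂ) ^ k *
        ∑ j ∈ Finset.range (k * s + 1),
          (-1 : ℂ) ^ j * eg n x j * Eg (s - 1) n x (k * s - j) :=
  stmt14_general k n s hs x
end

section
/- For positive integers k, n, s: H_k^{(s)}(x_1,...,x_n) = \sum (-1)^{k + \sum_i (\lambda_i mod (s+1))} m_{\lambda}(x_1,...,x_n), where the sum is over partitions \lambda of k all of whose parts are congruent to 0 or 1 modulo s+1. In particular, when s is odd, H_k^{(s)}(x_1,...,x_n) = \sum m_{\lambda}(x_1,...,x_n) over the same set of partitions. -/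
open PowerSeries Finset

/-- The coefficients of `(1 + X + ⋯ + X ^ (m - 1))⁻¹ = (1 - X) / (1 - X ^ m)`. -/
def geomSumInvCoeff (R : Type*) [Ring R] (m d : ℕ) : R :=
  if d % m = 0 ∨ d % m = 1 then (-1) ^ (d % m) else 0

theorem Nat.add_one_mod_eq_one_iff {m e : ℕ} (hm : 2 ≤ m) : (e + 1) % m = 1 ↔ m ∣ e := by
  rw [Nat.dvd_iff_mod_eq_zero, Nat.add_mod, Nat.one_mod_eq_one.mpr (by omega)]
  have := Nat.mod_lt e (by omega : 0 < m)
  rcases (by omega : e % m + 1 < m ∨ e % m + 1 = m) with h | h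
  · rw [Nat.mod_eq_of_lt h]; omega
  · rw [h, Nat.mod_self]; omega

section GeomSumInv

variable {R : Type*} {m : ℕ}

theorem one_sub_X_pow_mul_mk_dvd [Ring R] (hm : 0 < m) :
    (1 - X ^ m : R⟦X⟧) * mk (fun d => if m ∣ d then 1 else 0) = 1 := by
  ext d
  rw [sub_mul, one_mul, map_sub, coeff_X_pow_mul', coeff_mk, coeff_one]
  by_cases hmd : m ≤ d
  · have hd : d ≠ 0 := by omega
    simp [hmd, hd, coeff_mk, Nat.dvd_sub_iff_left hmd dvd_rfl]
  · have hd : m ∣ d ↔ d = 0 := ⟨fun h => Nat.eq_zero_of_dvd_of_lt h (by omega), by simp_all⟩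
    simp [hmd, hd]

theorem one_sub_X_mul_mk_dvd [Ring R] (hm : 2 ≤ m) :
    (1 - X : R⟦X⟧) * mk (fun d => if m ∣ d then 1 else 0) = mk (geomSumInvCoeff R m) := by
  ext (_ | e)
  · simp [geomSumInvCoeff]
  · rw [sub_mul, one_mul, map_sub, coeff_succ_X_mul, coeff_mk, coeff_mk, coeff_mk,
      geomSumInvCoeff]
    by_cases he : m ∣ e
    · have he1 : ¬ m ∣ e + 1 := fun h => by
        have := Nat.le_of_dvd one_pos ((Nat.dvd_add_right he).1 h); omega
      simp [he, he1, (Nat.add_one_mod_eq_one_iff hm).2 he]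
    by_cases he1 : m ∣ e + 1
    · simp [he, he1, Nat.mod_eq_zero_of_dvd he1]
    · have h0 : (e + 1) % m ≠ 0 := mt Nat.dvd_of_mod_eq_zero he1
      have h1 : (e + 1) % m ≠ 1 := mt (Nat.add_one_mod_eq_one_iff hm).1 he
      simp [he, he1, h0, h1]

theorem sum_range_X_pow_mul_mk_geomSumInvCoeff [CommRing R] (hm : 2 ≤ m) :
    (∑ j ∈ range m, (X : R⟦X⟧) ^ j) * mk (geomSumInvCoeff R m) = 1 := by
  rw [← one_sub_X_mul_mk_dvd hm, mul_left_comm, ← mul_assoc, mul_neg_geom_sum,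
    one_sub_X_pow_mul_mk_dvd (by omega)]

theorem inv_sum_range_C_pow_mul_X_pow {k : Type*} [Field k] (hm : 2 ≤ m) (a : k) :
    (∑ j ∈ range m, C (a ^ j) * X ^ j)⁻¹ = mk fun d => a ^ d * geomSumInvCoeff k m d := by
  have hrescale : ∑ j ∈ range m, C (a ^ j) * X ^ j = rescale a (∑ j ∈ range m, X ^ j) := by
    simp [map_sum, rescale_X, mul_pow]
  have hmul : (∑ j ∈ range m, C (a ^ j) * X ^ j) * mk (fun d => a ^ d * geomSumInvCoeff k m d)
      = 1 := by
    rw [hrescale, ← rescale_mk, ← map_mul, sum_range_X_pow_mul_mk_geomSumInvCoeff hm, map_one]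
  rw [inv_eq_iff_mul_eq_one (left_ne_zero_of_mul_eq_one (by rw [← map_mul, hmul, map_one])),
    mul_comm, hmul]

end GeomSumInv

@[to_additive]
theorem Multiset.prod_map_filter_of_ne {α M : Type*} [CommMonoid M] (p : α → Prop)
    [DecidablePred p] {s : Multiset α} {c : α → M} (h : ∀ a ∈ s, c a ≠ 1 → p a) :
    ((s.filter p).map c).prod = (s.map c).prod := by
  have hnot : ((s.filter (¬ p ·)).map c).prod = 1 :=
    Multiset.prod_eq_one fun b hb => by
      obtain ⟨a, ha, rfl⟩ := Multiset.mem_map.1 hb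
      obtain ⟨has, hpa⟩ := Multiset.mem_filter.1 ha
      exact not_not.1 (mt (h a has) hpa)
  rw [← mul_one ((s.filter p).map c).prod, ← hnot, ← Multiset.prod_add, ← Multiset.map_add,
    Multiset.filter_add_not]

theorem Finset.sum_finsuppAntidiag_eq_sum_piAntidiag {ι μ M : Type*} [DecidableEq ι]
    [AddCommMonoid μ] [HasAntidiagonal μ] [DecidableEq μ] [AddCommMonoid M]
    (s : Finset ι) (n : μ) (g : (ι → μ) → M) :
    ∑ l ∈ finsuppAntidiag s n, g l = ∑ f ∈ piAntidiag s n, g f := by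
  rw [finsuppAntidiag, sum_map]
  exact sum_attach (piAntidiag s n) g

theorem PowerSeries.coeff_prod_eq_sum_piAntidiag {ι R : Type*} [CommSemiring R] [DecidableEq ι]
    (φ : ι → R⟦X⟧) (d : ℕ) (s : Finset ι) :
    coeff d (∏ i ∈ s, φ i) = ∑ f ∈ piAntidiag s d, ∏ i ∈ s, coeff (f i) (φ i) := by
  rw [coeff_prod, sum_finsuppAntidiag_eq_sum_piAntidiag s d fun f => ∏ i ∈ s, coeff (f i) (φ i)]

section ExponentPartition

variable {ι : Type*} [Fintype ι]

/-- Junk value `indiscrete k` when the exponents do not sum to `k`. -/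
noncomputable def exponentPartition (k : ℕ) (f : ι → ℕ) : Nat.Partition k :=
  if h : ∑ i, f i = k then .ofSums k (univ.val.map f) h else .indiscrete k

theorem exponentPartition_eq_iff {k : ℕ} {f : ι → ℕ} (hf : ∑ i, f i = k)
    (lam : Nat.Partition k) :
    exponentPartition k f = lam ↔ (univ.val.map f).filter (· ≠ 0) = lam.parts := by
  rw [exponentPartition, dif_pos hf, Nat.Partition.ext_iff]
  rfl

theorem prod_eq_prod_map_parts_of_exponentPartition_eq {M : Type*} [CommMonoid M] {c : ℕ → M}
    (hc : c 0 = 1) {k : ℕ} {f : ι → ℕ} (hf : ∑ i, f i = k) (lam : Nat.Partition k)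
    (hlam : exponentPartition k f = lam) : ∏ i, c (f i) = (lam.parts.map c).prod := by
  rw [← (exponentPartition_eq_iff hf lam).1 hlam,
    Multiset.prod_map_filter_of_ne _ fun a _ hca => by rintro rfl; exact hca hc, Multiset.map_map]
  rfl

end ExponentPartition

theorem msym_eq_sum_piAntidiag (n : ℕ) (x : Fin n → ℂ) (k : ℕ) (lam : Nat.Partition k) :
    msym n x k lam = ∑ f ∈ piAntidiag univ k with exponentPartition k f = lam, ∏ i, x i ^ f i := by
  refine sum_congr (ext fun f => ?_) fun _ _ => rfl
  simp only [mem_filter, Fintype.mem_piFinset, mem_range, mem_piAntidiag, mem_univ,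
    implies_true, and_true, Nat.lt_succ_iff]
  constructor
  · rintro ⟨-, hparts⟩
    have hf : ∑ i, f i = k := by
      rw [← lam.parts_sum, ← hparts]
      have := Multiset.sum_map_filter_of_ne (· ≠ 0) (s := univ.val.map f) (c := id)
        fun a _ ha => ha
      rw [Multiset.map_id, Multiset.map_id] at this
      exact this.symm
    exact ⟨hf, (exponentPartition_eq_iff hf lam).2 hparts⟩
  · rintro ⟨hf, hlam⟩
    exact ⟨fun i => hf ▸ single_le_sum (fun j _ => Nat.zero_le (f j)) (mem_univ i),
      (exponentPartition_eq_iff hf lam).1 hlam⟩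

theorem coeff_prod_mk_mul_pow_eq_sum_msym {c : ℕ → ℂ} (hc : c 0 = 1) (n : ℕ) (x : Fin n → ℂ)
    (k : ℕ) :
    coeff k (∏ i, mk fun d => c d * x i ^ d) =
      ∑ lam : Nat.Partition k, (lam.parts.map c).prod * msym n x k lam := by
  rw [coeff_prod_eq_sum_piAntidiag, ← sum_fiberwise_of_maps_to (g := exponentPartition k)
    (t := univ) fun _ _ => mem_univ _]
  refine sum_congr rfl fun lam _ => ?_
  rw [msym_eq_sum_piAntidiag, mul_sum]
  refine sum_congr rfl fun f hf => ?_
  obtain ⟨hf, hlam⟩ := mem_filter.1 hf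
  rw [← prod_eq_prod_map_parts_of_exponentPartition_eq hc (mem_piAntidiag.1 hf).1 lam hlam,
    ← prod_mul_distrib]
  simp only [coeff_mk]

theorem prod_map_neg_one_pow_mul_geomSumInvCoeff {R : Type*} [CommRing R] (m : ℕ)
    (M : Multiset ℕ) :
    (M.map fun d => (-1) ^ d * geomSumInvCoeff R m d).prod =
      if ∀ p ∈ M, p % m = 0 ∨ p % m = 1 then (-1) ^ (M.sum + (M.map (· % m)).sum) else 0 := by
  induction M using Multiset.induction_on with
  | empty => simp
  | cons p M ih =>
    rw [Multiset.map_cons, Multiset.prod_cons, ih]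
    by_cases hp : p % m = 0 ∨ p % m = 1
    · have hc : (-1 : R) ^ p * geomSumInvCoeff R m p = (-1) ^ (p + p % m) := by
        rw [geomSumInvCoeff, if_pos hp, pow_add]
      simp only [Multiset.forall_mem_cons, hp, true_and, hc]
      split_ifs
      · rw [Multiset.sum_cons, Multiset.map_cons, Multiset.sum_cons, ← pow_add]
        congr 1
        omega
      · rw [mul_zero]
    · simp [geomSumInvCoeff, hp]

theorem even_sum_add_sum_map_mod {m : ℕ} (hm : 2 ∣ m) (M : Multiset ℕ) :
    Even (M.sum + (M.map (· % m)).sum) := by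
  induction M using Multiset.induction_on with
  | empty => simp
  | cons p M ih =>
    have hp : p % m % 2 = p % 2 := Nat.mod_mod_of_dvd p hm
    rw [Multiset.sum_cons, Multiset.map_cons, Multiset.sum_cons]
    rw [Nat.even_iff] at ih ⊢
    omega

theorem Hg_eq_sum_prod_map_mul_msym {s : ℕ} (hs : 0 < s) (n : ℕ) (x : Fin n → ℂ) (k : ℕ) :
    Hg s n x k = ∑ lam : Nat.Partition k,
      (lam.parts.map fun d => (-1) ^ d * geomSumInvCoeff ℂ (s + 1) d).prod * msym n x k lam := by
  rw [Hg, HgS, ← coeff_prod_mk_mul_pow_eq_sum_msym (by simp [geomSumInvCoeff])]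
  refine congrArg _ (prod_congr rfl fun i _ => ?_)
  rw [inv_sum_range_C_pow_mul_X_pow (by omega)]
  congr 1
  funext d
  rw [neg_pow]
  ring

theorem Hg_eq_sum_filter_neg_one_pow_mul_msym {s : ℕ} (hs : 0 < s) (n : ℕ) (x : Fin n → ℂ)
    (k : ℕ) :
    Hg s n x k = ∑ lam ∈ univ.filter
        (fun lam : Nat.Partition k => ∀ p ∈ lam.parts, p % (s + 1) = 0 ∨ p % (s + 1) = 1),
      (-1 : ℂ) ^ (k + (lam.parts.map (fun p => p % (s + 1))).sum) * msym n x k lam := by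
  rw [Hg_eq_sum_prod_map_mul_msym hs, sum_filter]
  refine sum_congr rfl fun lam _ => ?_
  rw [prod_map_neg_one_pow_mul_geomSumInvCoeff, lam.parts_sum, ite_mul, zero_mul]

theorem stmt16_general (k n s : ℕ) (hs : 0 < s) (x : Fin n → ℂ) :
    (Hg s n x k =
      ∑ lam ∈ Finset.filter
          (fun lam : Nat.Partition k => ∀ p ∈ lam.parts, p % (s + 1) = 0 ∨ p % (s + 1) = 1)
          Finset.univ,
        (-1 : ℂ) ^ (k + (lam.parts.map (fun p => p % (s + 1))).sum) * msym n x k lam) ∧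
    (Odd s →
      Hg s n x k =
        ∑ lam ∈ Finset.filter
            (fun lam : Nat.Partition k => ∀ p ∈ lam.parts, p % (s + 1) = 0 ∨ p % (s + 1) = 1)
            Finset.univ,
          msym n x k lam) := by
  have hsigned := Hg_eq_sum_filter_neg_one_pow_mul_msym hs n x k
  refine ⟨hsigned, fun hodd => hsigned.trans (sum_congr rfl fun lam _ => ?_)⟩
  have heven := even_sum_add_sum_map_mod (Odd.add_one hodd).two_dvd lam.parts
  rw [lam.parts_sum] at heven
  rw [heven.neg_one_pow, one_mul]

/-- `H_k^{(s)} = ∑_{λ ⊢ k, λᵢ ≡ 0,1 (mod s+1)} (-1)^{k + ∑ (λᵢ mod (s+1))} m_λ`;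
in particular, for odd `s`, `H_k^{(s)} = ∑_{λ ⊢ k, λᵢ ≡ 0,1 (mod s+1)} m_λ`. -/
theorem stmt16 (k n s : ℕ) (hk : 0 < k) (hn : 0 < n) (hs : 0 < s) (x : Fin n → ℂ) :
    (Hg s n x k =
      ∑ lam ∈ Finset.filter
          (fun lam : Nat.Partition k => ∀ p ∈ lam.parts, p % (s + 1) = 0 ∨ p % (s + 1) = 1)
          Finset.univ,
        (-1 : ℂ) ^ (k + (lam.parts.map (fun p => p % (s + 1))).sum) * msym n x k lam) ∧
    (Odd s →
      Hg s n x k =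
        ∑ lam ∈ Finset.filter
            (fun lam : Nat.Partition k => ∀ p ∈ lam.parts, p % (s + 1) = 0 ∨ p % (s + 1) = 1)
            Finset.univ,
          msym n x k lam) :=
  stmt16_general k n s hs x
end

section
/- For positive integers k, n, s: the bi^s-nomial coefficient satisfies \binom{n}{k}_{s-1} = \sum_{j=0}^{\lfloor k/s \rfloor} (-1)^j \binom{n}{j} \binom{n+k-sj-1}{k-sj}, and conversely \binom{n}{k} = \sum_{j=0}^{ks} (-1)^{k+j} \binom{n}{j} \binom{n}{ks-j}_{s-1}. -/
/-! With `G = 1 + X + ⋯ + X^(s-1)` we have `G * (1 - X) = 1 - X^s`. Hence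
`G^n = (1 - X^s)^n * (1 - X)^(-n)` and `(1 - X)^n * G^n = (1 - X^s)^n`; reading off the
coefficients of `X^k`, resp. `X^(ks)`, with the binomial expansion of `(1 - X^s)^n` and
`(1 - X)^(-n) = ∑ₘ (n + m - 1 choose m) X^m` gives the two identities. -/

/-- The bi`s`nomial coefficient `(n choose k)_s`: the coefficient of `t^k`
in `(1 + t + t² + ⋯ + t^s)^n`. -/
noncomputable def bis (s n k : ℕ) : ℤ :=
  PowerSeries.coeff (R := ℤ) k ((∑ j ∈ Finset.range (s + 1), PowerSeries.X ^ j) ^ n)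

open PowerSeries Finset

namespace PowerSeries

variable {R : Type*} [CommRing R]

theorem one_sub_X_pow_pow_eq_sum (s n : ℕ) :
    ((1 : R⟦X⟧) - X ^ s) ^ n =
      ∑ j ∈ range (n + 1), C ((-1 : R) ^ j * n.choose j) * X ^ (s * j) := by
  rw [sub_eq_neg_add, add_pow]
  refine sum_congr rfl fun j _ => ?_
  rw [neg_pow, one_pow, mul_one, ← pow_mul, map_mul, map_pow, map_neg, map_one, map_natCast]
  ring

theorem coeff_one_sub_X_pow_pow_mul {s : ℕ} (hs : 0 < s) (n k : ℕ) (f : R⟦X⟧) :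
    coeff k ((1 - X ^ s) ^ n * f) =
      ∑ j ∈ range (k / s + 1), (-1) ^ j * n.choose j * coeff (k - s * j) f := by
  set g : ℕ → R := fun j =>
    (-1) ^ j * n.choose j * if s * j ≤ k then coeff (k - s * j) f else 0
  have hg_choose : ∀ j ≥ n + 1, g j = 0 := fun j hj => by
    simp [g, Nat.choose_eq_zero_of_lt (Nat.lt_of_succ_le hj)]
  have hg_div : ∀ j ≥ k / s + 1, g j = 0 := fun j hj => by
    have : k < s * j := by rw [mul_comm]; exact (Nat.div_lt_iff_lt_mul hs).1 hj
    simp [g, this.not_ge]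
  calc coeff k ((1 - X ^ s) ^ n * f) = ∑ j ∈ range (n + 1), g j := by
        simp only [one_sub_X_pow_pow_eq_sum, sum_mul, map_sum, mul_assoc, coeff_C_mul,
          coeff_X_pow_mul', g]
    _ = ∑ j ∈ range (n + 1 + (k / s + 1)), g j :=
        (eventually_constant_sum hg_choose (Nat.le_add_right _ _)).symm
    _ = ∑ j ∈ range (k / s + 1), g j := eventually_constant_sum hg_div (Nat.le_add_left _ _)
    _ = _ := sum_congr rfl fun j hj => by
        have : s * j ≤ k := by
          rw [mul_comm]; exact (Nat.le_div_iff_mul_le hs).1 (Nat.lt_succ_iff.1 (mem_range.1 hj))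
        simp [g, this]

theorem coeff_one_sub_X_pow_pow {s : ℕ} (hs : 0 < s) (n k : ℕ) :
    coeff (k * s) ((1 - X ^ s : R⟦X⟧) ^ n) = (-1) ^ k * n.choose k := by
  rw [← mul_one ((1 - X ^ s : R⟦X⟧) ^ n), coeff_one_sub_X_pow_pow_mul hs,
    Nat.mul_div_cancel k hs, sum_eq_single_of_mem k (self_mem_range_succ k)]
  · simp [mul_comm k s]
  · intro j hj hjk
    have : s * j < k * s := by
      rw [mul_comm]
      exact Nat.mul_lt_mul_of_pos_right ((Nat.lt_succ_iff.1 (mem_range.1 hj)).lt_of_ne hjk) hs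
    simp [coeff_one, Nat.sub_ne_zero_of_lt this]

theorem coeff_invOneSubPow (n m : ℕ) :
    coeff m (invOneSubPow R n).val = (n + m - 1).choose m := by
  -- for `n = 0`, truncated subtraction makes `(m - 1).choose m` equal to `if m = 0 then 1 else 0`
  cases n with
  | zero => cases m <;> simp [invOneSubPow_zero, coeff_one]
  | succ d => simp [invOneSubPow_val_succ_eq_mk_add_choose, Nat.choose_symm_add]

end PowerSeries

theorem stmt19_general (k n s : ℕ) (hs : 0 < s) :
    (bis (s - 1) n k =
      ∑ j ∈ Finset.range (k / s + 1),
        (-1 : ℤ) ^ j * n.choose j * ((n + (k - s * j) - 1).choose (k - s * j))) ∧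
    ((n.choose k : ℤ) =
      ∑ j ∈ Finset.range (k * s + 1),
        (-1 : ℤ) ^ (k + j) * n.choose j * bis (s - 1) n (k * s - j)) := by
  set G : ℤ⟦X⟧ := ∑ j ∈ range s, X ^ j
  have hbis (m : ℕ) : bis (s - 1) n m = coeff m (G ^ n) := by rw [bis, Nat.sub_add_cancel hs]
  have hG : G ^ n * (1 - X) ^ n = (1 - X ^ s) ^ n := by rw [← mul_pow, geom_sum_mul_neg]
  constructor
  · have hGn : G ^ n = (1 - X ^ s) ^ n * (invOneSubPow ℤ n).val := by
      rw [← hG, mul_assoc, ← invOneSubPow_inv_eq_one_sub_pow, Units.inv_val, mul_one]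
    simp only [hbis, hGn, coeff_one_sub_X_pow_pow_mul hs, coeff_invOneSubPow]
  · have hexpand := coeff_one_sub_X_pow_pow_mul one_pos n (k * s) (G ^ n)
    rw [pow_one, mul_comm ((1 - X) ^ n), hG, coeff_one_sub_X_pow_pow hs, Nat.div_one]
      at hexpand
    simp only [one_mul, ← hbis] at hexpand
    calc (n.choose k : ℤ) = (-1) ^ k * ((-1) ^ k * n.choose k) := by
          rw [← mul_assoc, ← pow_add, Even.neg_one_pow ⟨k, rfl⟩, one_mul]
      _ = _ := by simp only [hexpand, mul_sum, pow_add, mul_assoc]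

/-- `(n choose k)_{s-1} = ∑_{j=0}^{⌊k/s⌋} (-1)^j (n choose j) (n+k-sj-1 choose k-sj)`
and `(n choose k) = ∑_{j=0}^{ks} (-1)^{k+j} (n choose j) (n choose ks-j)_{s-1}`. -/
theorem stmt19 (k n s : ℕ) (hk : 0 < k) (hn : 0 < n) (hs : 0 < s) :
    (bis (s - 1) n k =
      ∑ j ∈ Finset.range (k / s + 1),
        (-1 : ℤ) ^ j * n.choose j * ((n + (k - s * j) - 1).choose (k - s * j))) ∧
    ((n.choose k : ℤ) =
      ∑ j ∈ Finset.range (k * s + 1),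
        (-1 : ℤ) ^ (k + j) * n.choose j * bis (s - 1) n (k * s - j)) :=
  stmt19_general k n s hs
end
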